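/- arXiv:2006.13785 — 9 statements merged into one kernel-verified Lean document; each statement's English description precedes it below -/
import Mathlib

section
/- In a reduced ring R, the relation a ≤ b defined by a² = ab is a partial order on R. -/
/-!
For antisymmetry, `(a - b)² = (a² - ab) + (b² - ba)` vanishes, so `a = b`.
For transitivity, `a² = ab` and `b² = bc` give `a²(b - c) = ab(b - c) = 0`; in a reduced ring
`a²x = 0` forces `ax = 0`, hence `a² = ab = ac`.
-/

namespace IsReduced

variable {M₀ : Type*} [MonoidWithZero M₀] [IsReduced M₀] {a b : M₀}

theorem eq_zero_of_mul_self_eq_zero (h : a * a = 0) : a = 0 :=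
  eq_zero_of_pow_eq_zero (n := 2) (by rwa [sq])

theorem mul_eq_zero_symm (h : a * b = 0) : b * a = 0 :=
  eq_zero_of_mul_self_eq_zero <| by rw [mul_assoc, ← mul_assoc a, h, zero_mul, mul_zero]

theorem mul_eq_zero_of_mul_self_mul_eq_zero (h : a * a * b = 0) : a * b = 0 := by
  have hba : a * b * a = 0 := mul_eq_zero_symm (by rwa [← mul_assoc])
  exact eq_zero_of_mul_self_eq_zero <| by rw [← mul_assoc, hba, zero_mul]

end IsReduced

section Ring

variable {R : Type*} [Ring R] [IsReduced R] {a b c : R}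

theorem mul_self_eq_mul_trans (hab : a * a = a * b) (hbc : b * b = b * c) : a * a = a * c := by
  have h : a * a * (b - c) = 0 := by rw [hab, mul_assoc, mul_sub, hbc, sub_self, mul_zero]
  rw [hab, ← sub_eq_zero, ← mul_sub]
  exact IsReduced.mul_eq_zero_of_mul_self_mul_eq_zero h

theorem eq_of_mul_self_eq_mul_of_mul_self_eq_mul (hab : a * a = a * b) (hba : b * b = b * a) :
    a = b := by
  have h : (a - b) * (a - b) = (a * a - a * b) + (b * b - b * a) := by noncomm_ring
  rw [hab, hba, sub_self, sub_self, add_zero] at h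
  exact sub_eq_zero.mp (IsReduced.eq_zero_of_mul_self_eq_zero h)

end Ring

/-- In a reduced ring `R`, the relation `a ≤ b` defined by `a² = ab`
is a partial order on `R`. -/
theorem stmt_0 (R : Type*) [Ring R] [IsReduced R] :
    IsPartialOrder R (fun a b => a * a = a * b) :=
  { refl := fun _ => rfl
    trans := fun _ _ _ => mul_self_eq_mul_trans
    antisymm := fun _ _ => eq_of_mul_self_eq_mul_of_mul_self_eq_mul }
end

section
/- Let R be a reduced ring which is rr-good. Then for each a ∈ R, the annihilator of a contains a unique largest idempotent; namely e = 1 ∧_rr (1 − a) satisfies e² = e, ea = 0, and any idempotent f with fa = 0 satisfies f ≤_rr e (equivalently f = fe). -/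
/-! The infimum `e = 1 ∧_rr (1 - a)` lies below `1`, which says exactly that `e` is idempotent;
for an idempotent `f`, lying below `1 - a` says exactly that `f a = 0`. So the idempotents
annihilating `a` are precisely the common lower bounds of `1` and `1 - a`, and the infimum is the
largest of them. -/

theorem isIdempotentElem_iff_mul_self_eq_mul_one {M : Type*} [MulOneClass M] {e : M} :
    IsIdempotentElem e ↔ e * e = e * 1 := by
  rw [mul_one]; rfl

theorem IsIdempotentElem.mul_self_eq_mul_one_sub_iff {R : Type*} [NonAssocRing R] {e : R}
    (he : IsIdempotentElem e) (a : R) : e * e = e * (1 - a) ↔ e * a = 0 := by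
  rw [he.eq, mul_sub, mul_one, eq_sub_iff_add_eq, add_eq_left]

theorem stmt_5_general {R : Type*} [Ring R]
    (hgood : ∀ a b : R, ∃ c : R, c * c = c * a ∧ c * c = c * b ∧
      ∀ d : R, d * d = d * a → d * d = d * b → d * d = d * c)
    (a : R) :
    ∃ e : R, (e * e = e * 1 ∧ e * e = e * (1 - a) ∧
        ∀ d : R, d * d = d * 1 → d * d = d * (1 - a) → d * d = d * e) ∧
      e * e = e ∧ e * a = 0 ∧
      ∀ f : R, f * f = f → f * a = 0 → f = f * e := by
  obtain ⟨e, he_one, he_sub, he_inf⟩ := hgood 1 (1 - a)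
  have he : IsIdempotentElem e := isIdempotentElem_iff_mul_self_eq_mul_one.mpr he_one
  refine ⟨e, ⟨he_one, he_sub, he_inf⟩, he, (he.mul_self_eq_mul_one_sub_iff a).mp he_sub, ?_⟩
  intro f hf hfa
  have hfe := he_inf f (isIdempotentElem_iff_mul_self_eq_mul_one.mp hf)
    ((IsIdempotentElem.mul_self_eq_mul_one_sub_iff hf a).mpr hfa)
  rwa [hf] at hfe

/-- In an rr-good reduced ring, the annihilator of each element contains a
unique largest idempotent, namely `e = 1 ∧_rr (1 - a)`. -/
theorem stmt_5 {R : Type*} [Ring R] [IsReduced R]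
    (hgood : ∀ a b : R, ∃ c : R, c * c = c * a ∧ c * c = c * b ∧
      ∀ d : R, d * d = d * a → d * d = d * b → d * d = d * c)
    (a : R) :
    ∃ e : R, (e * e = e * 1 ∧ e * e = e * (1 - a) ∧
        ∀ d : R, d * d = d * 1 → d * d = d * (1 - a) → d * d = d * e) ∧
      e * e = e ∧ e * a = 0 ∧
      ∀ f : R, f * f = f → f * a = 0 → f = f * e :=
  stmt_5_general hgood a
end

section
/- Let R be a reduced ring such that for every a ∈ R with ann(a) ≠ 0, there is a unique largest idempotent e ≠ 0 in ann(a) (largest meaning every idempotent f in ann(a) satisfies f = fe). Then R is weakly Baer: for every a ∈ R, ann(a) is generated by an idempotent. -/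
/-!
If `e` is the largest idempotent annihilating `a`, then `a + e` has no nonzero idempotent in its
annihilator; by hypothesis its annihilator is then zero. For `a * x = 0`, the element `x - e * x`
is killed by both `a` and `e`, hence by `a + e`, so `x = e * x ∈ eR`.
-/

theorem mul_eq_zero_symm_of_isReduced {M : Type*} [MonoidWithZero M] [IsReduced M] {a b : M}
    (h : a * b = 0) : b * a = 0 :=
  IsReduced.eq_zero _ ⟨2, by rw [pow_two, mul_assoc, ← mul_assoc a, h, zero_mul, mul_zero]⟩

theorem eq_zero_of_isIdempotentElem_of_add_mul_eq_zero {R : Type*} [Ring R] [IsReduced R]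
    {a e k : R} (he : IsIdempotentElem e) (hk : IsIdempotentElem k) (hae : a * e = 0)
    (hmax : ∀ f : R, IsIdempotentElem f → a * f = 0 → f = f * e) (h : (a + e) * k = 0) :
    k = 0 := by
  have hea : e * a = 0 := mul_eq_zero_symm_of_isReduced hae
  have hek : e * k = 0 :=
    calc e * k = (e * a + e * e) * k := by rw [hea, he.eq, zero_add]
      _ = e * ((a + e) * k) := by rw [← mul_add, mul_assoc]
      _ = 0 := by rw [h, mul_zero]
  have hak : a * k = 0 := by rwa [add_mul, hek, add_zero] at h
  rw [hmax k hk hak, mul_eq_zero_symm_of_isReduced hek]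

/-- If in a reduced ring every element with nonzero annihilator admits a unique
largest nonzero idempotent in its annihilator, then the ring is weakly Baer. -/
theorem stmt_6 {R : Type*} [Ring R] [IsReduced R]
    (h : ∀ a : R, (∃ x : R, x ≠ 0 ∧ a * x = 0) →
      ∃ e : R, e ≠ 0 ∧ e * e = e ∧ a * e = 0 ∧
        ∀ f : R, f * f = f → a * f = 0 → f = f * e) :
    ∀ a : R, ∃ e : R, e * e = e ∧ ∀ x : R, a * x = 0 ↔ ∃ r : R, x = e * r := by
  intro a
  by_cases hann : ∃ x : R, x ≠ 0 ∧ a * x = 0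
  · obtain ⟨e, -, he, hae, hmax⟩ := h a hann
    refine ⟨e, he, fun x => ⟨fun hx => ⟨x, ?_⟩, ?_⟩⟩
    · have hy : (a + e) * (x - e * x) = 0 := by
        rw [add_mul, mul_sub, mul_sub, hx, ← mul_assoc, ← mul_assoc, hae, he]
        simp
      by_contra hne
      obtain ⟨k, hk0, hk, hak, -⟩ := h (a + e) ⟨x - e * x, sub_ne_zero.mpr hne, hy⟩
      exact hk0 (eq_zero_of_isIdempotentElem_of_add_mul_eq_zero he hk hae hmax hak)
    · rintro ⟨r, rfl⟩
      rw [← mul_assoc, hae, zero_mul]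
  · refine ⟨0, mul_zero 0, fun x => ⟨fun hx => ⟨0, ?_⟩, ?_⟩⟩
    · rw [zero_mul]
      exact not_not.mp fun hx0 => hann ⟨x, hx0, hx⟩
    · rintro ⟨r, rfl⟩
      simp
end

section
/- Let R be a reduced ring and r, s ∈ R. If k₁ is a maximal element among the nonzero rr-lower bounds of r and s (i.e., no nonzero common lower bound is strictly rr-above k₁), then r and s + k₁ have no nonzero common rr-lower bound. In particular this holds when k₁ = r ∧_rr s exists. -/
/-!
Write `a ≤ b` for `a * a = a * b`. In a reduced ring `xy = 0` forces `yx = 0` and `xzy = 0`,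
so `a ≤ b` is also `a * a = b * a`. If `c ≤ r` and `c ≤ s + k₁`, then reading the second relation
on the right gives `k₁ c = (r - s) c`, while `k₁ (r - s) = k₁² - k₁² = 0`; hence
`(k₁ c)² = (k₁ c (r - s)) c = 0`, so `k₁` and `c` are orthogonal. Then `k₁ + c` is a nonzero common
lower bound of `r` and `s` lying above `k₁`, and maximality forces `c = 0`.
-/

theorem add_mul_self_eq_add_mul_of_mul_eq_zero {R : Type*} [NonUnitalNonAssocSemiring R]
    {a b r : R} (hab : a * b = 0) (hba : b * a = 0) (ha : a * a = a * r) (hb : b * b = b * r) :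
    (a + b) * (a + b) = (a + b) * r := by
  rw [add_mul, mul_add, mul_add, hab, hba, add_zero, zero_add, ha, hb, add_mul]

namespace IsReduced

section MonoidWithZero

variable {M₀ : Type*} [MonoidWithZero M₀] [IsReduced M₀] {a b : M₀}

theorem mul_mul_eq_zero (h : a * b = 0) (x : M₀) : a * x * b = 0 :=
  sq_eq_zero_iff.mp <| by
    rw [sq, mul_assoc, ← mul_assoc b, ← mul_assoc b, mul_eq_zero_symm h, zero_mul, zero_mul,
      mul_zero]

end MonoidWithZero

theorem mul_self_eq_mul_comm {R : Type*} [Ring R] [IsReduced R] {a b : R}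
    (h : a * a = a * b) : a * a = b * a := by
  have : (a - b) * a = 0 := mul_eq_zero_symm (by rw [mul_sub, h, sub_self])
  rwa [sub_mul, sub_eq_zero] at this

theorem mul_eq_zero_of_le_of_le_add {R : Type*} [Ring R] [IsReduced R] {r s k c : R}
    (hkr : k * k = k * r) (hks : k * k = k * s) (hcr : c * c = c * r)
    (hcs : c * c = c * (s + k)) : k * c = 0 := by
  have hkc : k * c = (r - s) * c := by
    rw [sub_mul, ← mul_self_eq_mul_comm hcr, mul_self_eq_mul_comm hcs, add_mul,
      add_sub_cancel_left]
  have hk : k * (r - s) = 0 := by rw [mul_sub, ← hkr, ← hks, sub_self]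
  refine sq_eq_zero_iff.mp ?_
  calc (k * c) ^ 2 = k * c * (r - s) * c := by rw [sq, mul_assoc (k * c) (r - s), ← hkc]
    _ = 0 := by rw [mul_mul_eq_zero hk, zero_mul]

end IsReduced

/-- If `k₁` is maximal among the nonzero common rr-lower bounds of `r` and `s`,
then `r` and `s + k₁` have no nonzero common rr-lower bound. -/
theorem stmt_8 {R : Type*} [Ring R] [IsReduced R] (r s k₁ : R)
    (hk₁ : k₁ ≠ 0) (h1r : k₁ * k₁ = k₁ * r) (h1s : k₁ * k₁ = k₁ * s)
    (hmax : ∀ k : R, k ≠ 0 → k * k = k * r → k * k = k * s →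
      k₁ * k₁ = k₁ * k → k = k₁) :
    ∀ c : R, c * c = c * r → c * c = c * (s + k₁) → c = 0 := by
  intro c hcr hcs
  have hkc : k₁ * c = 0 := IsReduced.mul_eq_zero_of_le_of_le_add h1r h1s hcr hcs
  have hck : c * k₁ = 0 := IsReduced.mul_eq_zero_symm hkc
  have hcs' : c * c = c * s := by rw [hcs, mul_add, hck, add_zero]
  have hne : k₁ + c ≠ 0 := by
    intro h
    rw [← neg_eq_of_add_eq_zero_right h, mul_neg, neg_eq_zero] at hkc
    exact hk₁ (sq_eq_zero_iff.mp (sq k₁ ▸ hkc))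
  have hle : k₁ * k₁ = k₁ * (k₁ + c) := by rw [mul_add, hkc, add_zero]
  have := hmax (k₁ + c) hne (add_mul_self_eq_add_mul_of_mul_eq_zero hkc hck h1r hcr)
    (add_mul_self_eq_add_mul_of_mul_eq_zero hkc hck h1s hcs') hle
  rwa [add_eq_left] at this
end

section
/- Let R be a commutative reduced ring which is integrally closed in a commutative reduced rr-good ring S containing R as a subring. Then R is rr-good, and rr-infima in R coincide with those computed in S. -/
/-! The rr-infimum `z` of `a, b` in `S` is a root of `X² - aX`, hence integral over `R` and so in `R`;
since `R → S` is an injective multiplicative map, an rr-infimum in `S` lying in `R` is one in `R`. -/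

/-- `c` is an rr-infimum of `a` and `b`, where `x ≤_rr y` means `x * x = x * y`. -/
def IsRRInf {M : Type*} [Mul M] (a b c : M) : Prop :=
  c * c = c * a ∧ c * c = c * b ∧ ∀ d : M, d * d = d * a → d * d = d * b → d * d = d * c

theorem IsRRInf.of_map {M N F : Type*} [Mul M] [Mul N] [FunLike F M N] [MulHomClass F M N]
    {f : F} (hf : Function.Injective f) {a b c : M} (h : IsRRInf (f a) (f b) (f c)) :
    IsRRInf a b c := by
  obtain ⟨hca, hcb, hmax⟩ := h
  refine ⟨hf ?_, hf ?_, fun d hda hdb => hf ?_⟩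
  · simpa only [map_mul] using hca
  · simpa only [map_mul] using hcb
  · simpa only [map_mul] using
      hmax (f d) (by simpa only [map_mul] using congrArg f hda)
        (by simpa only [map_mul] using congrArg f hdb)

theorem isIntegral_of_mul_self_eq_mul {R S : Type*} [CommRing R] [Ring S] [Algebra R S]
    {z : S} (a : R) (h : z * z = z * algebraMap R S a) : IsIntegral R z := by
  refine ⟨Polynomial.X ^ 2 - Polynomial.C a * Polynomial.X, ?_, ?_⟩
  · exact Polynomial.monic_X_pow_sub (by compute_degree!)
  · simp [sq, h, Algebra.commutes]

theorem stmt_9_general {S : Type*} [CommRing S] (R : Subring S)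
    (hgoodS : ∀ x y : S, ∃ z : S, z * z = z * x ∧ z * z = z * y ∧
      ∀ w : S, w * w = w * x → w * w = w * y → w * w = w * z)
    (hic : ∀ s : S, ∀ p : Polynomial R, p.Monic →
      Polynomial.eval₂ R.subtype s p = 0 → s ∈ R) :
    ∀ a b : R, ∃ c : R,
      (c * c = c * a ∧ c * c = c * b ∧
        ∀ d : R, d * d = d * a → d * d = d * b → d * d = d * c) ∧
      ((c : S) * c = c * a ∧ (c : S) * c = c * b ∧
        ∀ w : S, w * w = w * (a : S) → w * w = w * (b : S) → w * w = w * c) := by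
  intro a b
  obtain ⟨z, hz⟩ : ∃ z : S, IsRRInf (a : S) b z := hgoodS a b
  have hzR : z ∈ R := by
    obtain ⟨p, hp, hpz⟩ := isIntegral_of_mul_self_eq_mul a hz.1
    exact hic z p hp hpz
  exact ⟨⟨z, hzR⟩, IsRRInf.of_map (f := R.subtype) Subtype.val_injective hz, hz⟩

/-- If a commutative reduced ring `R` is integrally closed in a commutative
reduced rr-good ring `S` containing it, then `R` is rr-good and rr-infima in
`R` coincide with those computed in `S`. -/
theorem stmt_9 {S : Type*} [CommRing S] [IsReduced S] (R : Subring S)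
    (hgoodS : ∀ x y : S, ∃ z : S, z * z = z * x ∧ z * z = z * y ∧
      ∀ w : S, w * w = w * x → w * w = w * y → w * w = w * z)
    (hic : ∀ s : S, ∀ p : Polynomial R, p.Monic →
      Polynomial.eval₂ R.subtype s p = 0 → s ∈ R) :
    ∀ a b : R, ∃ c : R,
      (c * c = c * a ∧ c * c = c * b ∧
        ∀ d : R, d * d = d * a → d * d = d * b → d * d = d * c) ∧
      ((c : S) * c = c * a ∧ (c : S) * c = c * b ∧
        ∀ w : S, w * w = w * (a : S) → w * w = w * (b : S) → w * w = w * c) :=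
  stmt_9_general R hgoodS hic
end

section
/- Let R be a reduced ring and a, b ∈ R with a ≤_rr b. Then every prime ideal containing b also contains a. -/
/-!
A reduced ring is reversible: if `x * y = 0` then `(y * x) ^ 2 = y * (x * y) * x = 0`, so
`y * x = 0`, and then `(x * r * y) ^ 2 = x * r * (y * x) * r * y = 0` gives `x * r * y = 0`.
Applied to `x = a` and `y = a - b`, the relation `a * a = a * b` becomes `a * r * a = a * r * b`
for every `r`, which lies in `p` whenever `b` does; primality of `p` then yields `a ∈ p`.
-/

section IsReduced

variable {M₀ : Type*} [MonoidWithZero M₀] [IsReduced M₀] {x y : M₀}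

theorem IsReduced.mul_eq_zero_symm_s10 (h : x * y = 0) : y * x = 0 :=
  eq_zero_of_pow_eq_zero (n := 2) <| by
    rw [sq, mul_assoc, ← mul_assoc x, h, zero_mul, mul_zero]

theorem IsReduced.mul_mul_eq_zero_s10 (h : x * y = 0) (r : M₀) : x * r * y = 0 :=
  eq_zero_of_pow_eq_zero (n := 2) <| by
    rw [sq, mul_assoc, ← mul_assoc y, ← mul_assoc y, IsReduced.mul_eq_zero_symm_s10 h,
      zero_mul, zero_mul, mul_zero]

end IsReduced

theorem IsReduced.mul_mul_eq_of_mul_self_eq {R : Type*} [Ring R] [IsReduced R] {a b : R}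
    (hab : a * a = a * b) (r : R) : a * r * a = a * r * b := by
  have hzero : a * (a - b) = 0 := by rw [mul_sub, hab, sub_self]
  rw [← sub_eq_zero, ← mul_sub]
  exact IsReduced.mul_mul_eq_zero_s10 hzero r

theorem stmt_10_general {R : Type*} [Ring R] [IsReduced R] (a b : R)
    (hab : a * a = a * b) (p : Ideal R)
    (hprime : (p : Set R) ≠ Set.univ ∧
      ∀ x y : R, (∀ r : R, x * r * y ∈ p) → x ∈ p ∨ y ∈ p)
    (hb : b ∈ p) : a ∈ p := by
  have haRa : ∀ r : R, a * r * a ∈ p := fun r => by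
    rw [IsReduced.mul_mul_eq_of_mul_self_eq hab r]
    exact p.mul_mem_left _ hb
  exact (hprime.2 a a haRa).elim id id

/-- If `a ≤rr b` in a reduced ring, then every prime (two-sided) ideal
containing `b` also contains `a`. -/
theorem stmt_10 {R : Type*} [Ring R] [IsReduced R] (a b : R)
    (hab : a * a = a * b) (p : Ideal R)
    (hright : ∀ x ∈ p, ∀ r : R, x * r ∈ p)
    (hprime : (p : Set R) ≠ Set.univ ∧
      ∀ x y : R, (∀ r : R, x * r * y ∈ p) → x ∈ p ∨ y ∈ p)
    (hb : b ∈ p) : a ∈ p :=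
  stmt_10_general a b hab p hprime hb
end

section
/- Let R be a reduced ring with only trivial idempotents (indecomposable), u a central unit and b ∈ R. If c ≤_rr u and c ≤_rr b, then c = 0 or c = u = b. In particular the rr-infimum u ∧_rr b always exists. -/
/-!
If `c ≤rr u` with `u` a central unit, then `c * u⁻¹` is idempotent, so in an indecomposable
ring `c = 0` or `c = u`; in the latter case `u * u = u * b` and cancelling the unit gives `u = b`.
Hence the rr-lower bounds of `u` and `b` are `0` alone, or `0` and `u = b`, and the larger one
is the infimum.
-/

theorem isIdempotentElem_mul_inv_of_mul_self_eq_mul {M : Type*} [Monoid M] {u : Mˣ} {c : M}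
    (hcu : Commute (u : M) c) (h : c * c = c * u) : IsIdempotentElem (c * ↑u⁻¹) :=
  calc c * ↑u⁻¹ * (c * ↑u⁻¹) = c * c * (↑u⁻¹ * ↑u⁻¹) := by
        rw [mul_assoc, ← mul_assoc (↑u⁻¹ : M) c, hcu.units_inv_left.eq]; simp only [mul_assoc]
    _ = c * ↑u⁻¹ := by rw [h, mul_assoc, Units.mul_inv_cancel_left]

theorem eq_zero_or_eq_of_mul_self_eq_mul_unit {M : Type*} [MonoidWithZero M]
    (hind : ∀ e : M, IsIdempotentElem e → e = 0 ∨ e = 1) {u : Mˣ} {c : M}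
    (hcu : Commute (u : M) c) (h : c * c = c * u) : c = 0 ∨ c = u := by
  have hc : c = c * ↑u⁻¹ * u := by simp
  rcases hind _ (isIdempotentElem_mul_inv_of_mul_self_eq_mul hcu h) with h0 | h1
  · exact .inl (by rw [hc, h0, zero_mul])
  · exact .inr (by rw [hc, h1, one_mul])

theorem eq_zero_or_eq_and_eq_of_rr_lowerBound {M : Type*} [MonoidWithZero M]
    (hind : ∀ e : M, IsIdempotentElem e → e = 0 ∨ e = 1) {u : Mˣ} {b c : M}
    (hcu : Commute (u : M) c) (hu : c * c = c * u) (hb : c * c = c * b) :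
    c = 0 ∨ (c = u ∧ (u : M) = b) := by
  refine (eq_zero_or_eq_of_mul_self_eq_mul_unit hind hcu hu).imp_right fun hcu' => ⟨hcu', ?_⟩
  subst hcu'
  exact (Units.mul_right_inj u).mp hb

theorem stmt_13_general {R : Type*} [Ring R]
    (hind : ∀ e : R, e * e = e → e = 0 ∨ e = 1)
    (u b : R) (hu : IsUnit u) (hc : ∀ r : R, u * r = r * u) :
    (∀ c : R, c * c = c * u → c * c = c * b → c = 0 ∨ (c = u ∧ u = b)) ∧
    (∃ d : R, d * d = d * u ∧ d * d = d * b ∧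
      ∀ c : R, c * c = c * u → c * c = c * b → c * c = c * d) := by
  obtain ⟨u, rfl⟩ := hu
  have lowerBound (c : R) (hcu : c * c = c * u) (hcb : c * c = c * b) :
      c = 0 ∨ (c = u ∧ (u : R) = b) :=
    eq_zero_or_eq_and_eq_of_rr_lowerBound hind (hc c) hcu hcb
  refine ⟨lowerBound, ?_⟩
  by_cases hub : (u : R) = b
  · exact ⟨u, rfl, by rw [hub], fun c hcu _ => hcu⟩
  · refine ⟨0, by simp, by simp, fun c hcu hcb => ?_⟩
    rcases lowerBound c hcu hcb with rfl | ⟨_, hub'⟩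
    · simp
    · exact absurd hub' hub

/-- In an indecomposable reduced ring, any common rr-lower bound `c` of a
central unit `u` and an element `b` satisfies `c = 0` or `c = u = b`;
in particular `u ∧rr b` exists. -/
theorem stmt_13 {R : Type*} [Ring R] [IsReduced R]
    (hind : ∀ e : R, e * e = e → e = 0 ∨ e = 1)
    (u b : R) (hu : IsUnit u) (hc : ∀ r : R, u * r = r * u) :
    (∀ c : R, c * c = c * u → c * c = c * b → c = 0 ∨ (c = u ∧ u = b)) ∧
    (∃ d : R, d * d = d * u ∧ d * d = d * b ∧
      ∀ c : R, c * c = c * u → c * c = c * b → c * c = c * d) :=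
  stmt_13_general hind u b hu hc
end

section
/- Let R be a reduced ring and (M, ≤) a totally ordered monoid with strict order. Then the generalized power series ring S = [[R^{M,≤}]] is reduced. -/
namespace HahnSeries

variable {Γ R : Type*} [AddCommMonoid Γ] [LinearOrder Γ] [IsOrderedCancelAddMonoid Γ]
  [Semiring R] [IsReduced R]

/- Cancellativity of the order makes the coefficient of `x * x` at `2 • x.order` equal to
`x.leadingCoeff ^ 2`, so a square-zero series has a nilpotent leading coefficient. -/
theorem eq_zero_of_mul_self_eq_zero {x : HahnSeries Γ R} (h : x * x = 0) : x = 0 := by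
  rw [← leadingCoeff_eq_zero]
  refine IsReduced.eq_zero _ ⟨2, ?_⟩
  rw [sq, ← coeff_mul_order_add_order, h, coeff_zero]

instance isReduced : IsReduced (HahnSeries Γ R) :=
  (isReduced_iff_pow_one_lt 2 one_lt_two).2 fun _ hx ↦
    eq_zero_of_mul_self_eq_zero (by rwa [sq] at hx)

end HahnSeries

/-- The generalized (Hahn) power series ring over a reduced ring, with exponents
in a strictly totally ordered (cancellative) monoid, is reduced. -/
theorem stmt_18 (Γ R : Type*) [AddCommMonoid Γ] [LinearOrder Γ] [IsOrderedCancelAddMonoid Γ]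
    [Ring R] [IsReduced R] : IsReduced (HahnSeries Γ R) :=
  HahnSeries.isReduced
end

section
/- Let R be a reduced ring and (M, ≤) a totally ordered monoid with strict order. Then every idempotent of the generalized power series ring S = [[R^{M,≤}]] is a constant series coming from an idempotent of R; i.e., the Boolean algebra of idempotents of S equals that of R. -/
/-!
Over a reduced ring, the leading coefficient of a nonzero series `f` has nonzero square, so
`order (f * f) = 2 • order f`; for an idempotent this forces `order f = 0`. Idempotents of a
reduced ring are central, so `c = C (f.coeff 0)` is an idempotent commuting with `f`, and
`g = f - c` satisfies `g³ = g`. This gives `3 • order g ≤ order g`, i.e. `order g ≤ 0`, while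
every exponent in the support of `g` is positive; hence `g = 0`.
-/

lemma IsIdempotentElem.commute_of_isReduced {R : Type*} [Ring R] [IsReduced R] {a : R}
    (ha : IsIdempotentElem a) (x : R) : Commute a x := by
  -- `a x (1 - a)` and `(1 - a) x a` square to zero, since `(1 - a) a = a (1 - a) = 0`.
  have left : a * x * (1 - a) = 0 := IsReduced.eq_zero _ ⟨2, by
    rw [pow_two, mul_assoc, ← mul_assoc (1 - a), ← mul_assoc (1 - a), ha.one_sub_mul_self,
      zero_mul, zero_mul, mul_zero]⟩
  have right : (1 - a) * x * a = 0 := IsReduced.eq_zero _ ⟨2, by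
    rw [pow_two, mul_assoc, ← mul_assoc a, ← mul_assoc a, ha.mul_one_sub_self,
      zero_mul, zero_mul, mul_zero]⟩
  rw [mul_sub, mul_one, sub_eq_zero] at left
  rw [sub_mul, one_mul, sub_mul, sub_eq_zero] at right
  rw [Commute, SemiconjBy, left, right]

lemma IsIdempotentElem.sub_mul_self_mul_self_of_commute {R : Type*} [NonUnitalRing R] {a b : R}
    (h : Commute a b) (ha : IsIdempotentElem a) (hb : IsIdempotentElem b) :
    (a - b) * (a - b) * (a - b) = a - b := by
  have hba : b * a = a * b := h.eq.symm
  have haba : a * b * a = a * b := by rw [mul_assoc, hba, ← mul_assoc, ha.eq]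
  have habb : a * b * b = a * b := by rw [mul_assoc, hb.eq]
  simp only [sub_mul, mul_sub, ha.eq, hb.eq, hba, haba, habb]
  abel

namespace HahnSeries

variable {Γ R : Type*} [AddCommMonoid Γ] [LinearOrder Γ] [IsOrderedCancelAddMonoid Γ] [Ring R]

lemma order_mul_self [IsReduced R] (x : HahnSeries Γ R) :
    (x * x).order = x.order + x.order := by
  rcases eq_or_ne x 0 with rfl | hx
  · simp
  refine order_mul_of_ne_zero fun h ↦ leadingCoeff_ne_zero.mpr hx ?_
  exact IsReduced.eq_zero _ ⟨2, by rw [pow_two, h]⟩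

lemma commute_C {a : R} (ha : ∀ r, Commute a r) (x : HahnSeries Γ R) : Commute (C a) x := by
  ext i
  rw [C_apply, coeff_single_zero_mul, coeff_mul_single_zero, (ha _).eq]

lemma order_nonpos_of_mul_mul_self_eq {x : HahnSeries Γ R} (h : x * x * x = x) :
    x.order ≤ 0 := by
  rcases eq_or_ne x 0 with rfl | hx
  · simp
  have h1 : x.orderTop + x.orderTop ≤ (x * x).orderTop := orderTop_add_le_mul
  have h2 : (x * x).orderTop + x.orderTop ≤ (x * x * x).orderTop := orderTop_add_le_mul
  rw [h] at h2
  have hle : x.orderTop + x.orderTop + x.orderTop ≤ x.orderTop :=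
    (add_le_add h1 le_rfl).trans h2
  rw [← order_eq_orderTop_of_ne_zero hx] at hle
  have : x.order + x.order ≤ 0 := add_le_iff_nonpos_left.mp (by exact_mod_cast hle)
  by_contra! hpos
  exact (add_pos hpos hpos).not_ge this

lemma order_eq_zero_of_isIdempotentElem [IsReduced R] {f : HahnSeries Γ R}
    (hf : IsIdempotentElem f) : f.order = 0 := by
  have h := order_mul_self f
  rwa [hf.eq, left_eq_add] at h

lemma isIdempotentElem_coeff_zero [IsReduced R] {f : HahnSeries Γ R}
    (hf : IsIdempotentElem f) : IsIdempotentElem (f.coeff 0) := by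
  have h := coeff_mul_order_add_order f f
  rwa [hf.eq, order_eq_zero_of_isIdempotentElem hf, add_zero, leadingCoeff_eq,
    order_eq_zero_of_isIdempotentElem hf, eq_comm] at h

theorem eq_C_of_isIdempotentElem [IsReduced R] {f : HahnSeries Γ R}
    (hf : IsIdempotentElem f) : f = C (f.coeff 0) := by
  set a := f.coeff 0
  set g := f - C a
  have ha : IsIdempotentElem a := isIdempotentElem_coeff_zero hf
  have hca : IsIdempotentElem (C a : HahnSeries Γ R) := by
    rw [IsIdempotentElem, ← map_mul, ha.eq]
  have hg_cube : g * g * g = g :=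
    hf.sub_mul_self_mul_self_of_commute (commute_C ha.commute_of_isReduced f).symm hca
  suffices hg : g = 0 from sub_eq_zero.mp hg
  by_contra hg
  have hg_zero : g.coeff 0 = 0 := by simp [g, a, C_apply]
  have hg_ne_zero {i : Γ} (hi : i ≠ 0) : g.coeff i = f.coeff i := by simp [g, C_apply, hi]
  have hgcoeff : g.coeff g.order ≠ 0 := coeff_order_eq_zero.not.mpr hg
  have hord_ne : g.order ≠ 0 := fun h ↦ hgcoeff (h ▸ hg_zero)
  have hfcoeff : f.coeff g.order ≠ 0 := hg_ne_zero hord_ne ▸ hgcoeff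
  have hpos : 0 ≤ g.order :=
    order_eq_zero_of_isIdempotentElem hf ▸ order_le_of_coeff_ne_zero hfcoeff
  exact hord_ne (le_antisymm (order_nonpos_of_mul_mul_self_eq hg_cube) hpos)

end HahnSeries

/-- Every idempotent of the generalized (Hahn) power series ring over a reduced
ring is a constant series coming from an idempotent of the base ring. -/
theorem stmt_19 (Γ R : Type*) [AddCommMonoid Γ] [LinearOrder Γ] [IsOrderedCancelAddMonoid Γ]
    [Ring R] [IsReduced R] (f : HahnSeries Γ R) (hf : f * f = f) :
    ∃ r : R, r * r = r ∧ f = HahnSeries.single (0 : Γ) r :=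
  ⟨f.coeff 0, HahnSeries.isIdempotentElem_coeff_zero hf,
    (HahnSeries.eq_C_of_isIdempotentElem hf).trans (HahnSeries.C_apply _)⟩
end
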